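/- arXiv:2010.10816 — 5 statements merged into one kernel-verified Lean document; each statement's English description precedes it below -/
import Mathlib

section
/- For every real r ≥ 1 and every z ∈ (0,1), the function ϑ_r(z) := (r−1)Ψ_r(z) + (1−z)Ψ_r'(z) equals (r+1)(z(1−z)^r + z^r(1−z)) + (r−1)(z^{r+1} + (1−z)^{r+1}) and is strictly positive. -/
/-!
Differentiate `Ψ_r` term by term. After writing `z ^ (r + 1)`, `(1 - z) ^ (r ± 1)` and
`(1 - z) ^ (r - 2)` through `z ^ r` and `(1 - z) ^ r`, the identity for `ϑ_r` is a rational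
identity in `z`, `r`, `z ^ r`, `(1 - z) ^ r`. In the closed form the first summand is positive and
the second one is nonnegative for `r ≥ 1`.
-/

open Real

namespace Psi

noncomputable def psi (r v : ℝ) : ℝ :=
  (r - 1) * v * (1 - v) ^ r + v ^ (r + 1) + r * v ^ 2 * (1 - v) ^ (r - 1)

theorem hasDerivAt_psi (r : ℝ) {z : ℝ} (hz : z ≠ 0) (hz' : 1 - z ≠ 0) :
    HasDerivAt (psi r)
      ((r - 1) * (1 - z) ^ r - (r - 1) * r * z * (1 - z) ^ (r - 1) + (r + 1) * z ^ r
        + 2 * r * z * (1 - z) ^ (r - 1) - r * (r - 1) * z ^ 2 * (1 - z) ^ (r - 1 - 1)) z := by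
  have hsub : HasDerivAt (fun v : ℝ => 1 - v) (-1) z := by
    simpa using (hasDerivAt_id z).const_sub 1
  have hw (p : ℝ) : HasDerivAt (fun v : ℝ => (1 - v) ^ p) (p * (1 - z) ^ (p - 1) * -1) z :=
    (hasDerivAt_rpow_const (Or.inl hz')).comp z hsub
  have hv : HasDerivAt (fun v : ℝ => v ^ (r + 1)) ((r + 1) * z ^ (r + 1 - 1)) z :=
    hasDerivAt_rpow_const (Or.inl hz)
  refine HasDerivAt.congr_deriv (f := psi r)
    (((((hasDerivAt_id z).const_mul (r - 1)).mul (hw r)).add hv).add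
      (((hasDerivAt_pow 2 z).const_mul r).mul (hw (r - 1)))) ?_
  rw [add_sub_cancel_right, id]
  push_cast
  ring

theorem theta_eq_closed_form (r : ℝ) {z : ℝ} (hz : z ≠ 0) (hz' : 1 - z ≠ 0) :
    (r - 1) * psi r z + (1 - z) * deriv (psi r) z
      = (r + 1) * (z * (1 - z) ^ r + z ^ r * (1 - z)) + (r - 1) * (z ^ (r + 1) + (1 - z) ^ (r + 1)) := by
  rw [(hasDerivAt_psi r hz hz').deriv, psi, rpow_sub_one hz', rpow_sub_one hz', rpow_sub_one hz',
    rpow_add_one hz, rpow_add_one hz']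
  field_simp
  ring

theorem theta_closed_form_pos {r z : ℝ} (hr : 1 ≤ r) (hz : z ∈ Set.Ioo (0 : ℝ) 1) :
    0 < (r + 1) * (z * (1 - z) ^ r + z ^ r * (1 - z)) + (r - 1) * (z ^ (r + 1) + (1 - z) ^ (r + 1)) := by
  obtain ⟨hz0, hz1⟩ := hz
  have hw : 0 < 1 - z := sub_pos.mpr hz1
  positivity

end Psi

open Real in
theorem stmt_3 (r : ℝ) (hr : 1 ≤ r) (z : ℝ) (hz : z ∈ Set.Ioo (0:ℝ) 1)
    (Ψ : ℝ → ℝ)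
    (hΨ : ∀ v : ℝ, Ψ v = (r - 1) * v * (1 - v) ^ r + v ^ (r + 1) + r * v ^ 2 * (1 - v) ^ (r - 1)) :
    (r - 1) * Ψ z + (1 - z) * deriv Ψ z
      = (r + 1) * (z * (1 - z) ^ r + z ^ r * (1 - z)) + (r - 1) * (z ^ (r + 1) + (1 - z) ^ (r + 1))
    ∧ 0 < (r - 1) * Ψ z + (1 - z) * deriv Ψ z := by
  obtain rfl : Ψ = Psi.psi r := funext hΨ
  rw [Psi.theta_eq_closed_form r hz.1.ne' (sub_pos.mpr hz.2).ne']
  exact ⟨rfl, Psi.theta_closed_form_pos hr hz⟩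
end

section
/- Let f : (a,b) → (0,∞) be a positive probability density on a bounded interval (a,b) with cumulative distribution function F(x) = ∫_a^x f(ξ)dξ and inverse (quantile function) F^{-1} : [0,1] → [a,b]. Then f is log-concave on (a,b) if and only if f ∘ F^{-1} is concave on (0,1). -/
open Set Filter in
/-- Continuity plus an antitone right derivative implies concavity. -/
lemma aux_concave_of_right_deriv {p q : ℝ} {φ D : ℝ → ℝ}
    (hcont : ContinuousOn φ (Ioo p q))
    (hD : ∀ x ∈ Ioo p q, HasDerivWithinAt φ (D x) (Ici x) x)
    (hanti : ∀ x ∈ Ioo p q, ∀ y ∈ Ioo p q, x ≤ y → D y ≤ D x) :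
    ConcaveOn ℝ (Ioo p q) φ := by
  apply concaveOn_of_slope_anti_adjacent (convex_Ioo p q)
  intro x y z hx hz hxy hyz
  have hy : y ∈ Ioo p q := ⟨hx.1.trans hxy, hyz.trans hz.2⟩
  have key1 : φ z - φ y ≤ D y * (z - y) := by
    have main := image_le_of_deriv_right_le_deriv_boundary
      (f := φ) (f' := D) (a := y) (b := z)
      (hcont.mono (Icc_subset_Ioo hy.1 hz.2))
      (fun t ht => hD t ⟨hy.1.trans_le ht.1, ht.2.trans hz.2⟩)
      (B := fun t => D y * t + (φ y - D y * y)) (B' := fun _ => D y)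
      (le_of_eq (by ring))
      (Continuous.continuousOn (by continuity))
      (fun t _ => by
        have hB : HasDerivAt (fun s => D y * s + (φ y - D y * y)) (D y) t := by
          simpa using ((hasDerivAt_id t).const_mul (D y)).add_const (φ y - D y * y)
        exact hB.hasDerivWithinAt)
      (fun t ht => hanti y hy t ⟨hy.1.trans_le ht.1, ht.2.trans hz.2⟩ ht.1)
    have := main (right_mem_Icc.2 hyz.le)
    linarith
  have key2 : D y * (y - x) ≤ φ y - φ x := by
    have main := image_le_of_deriv_right_le_deriv_boundary
      (f := fun t => -φ t) (f' := fun t => -D t) (a := x) (b := y)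
      ((hcont.mono (Icc_subset_Ioo hx.1 hy.2)).neg)
      (fun t ht => (hD t ⟨hx.1.trans_le ht.1, ht.2.trans hy.2⟩).neg)
      (B := fun t => -D y * t + (D y * x - φ x)) (B' := fun _ => -D y)
      (le_of_eq (by ring))
      (Continuous.continuousOn (by continuity))
      (fun t _ => by
        have hB : HasDerivAt (fun s => -D y * s + (D y * x - φ x)) (-D y) t := by
          simpa using ((hasDerivAt_id t).const_mul (-D y)).add_const (D y * x - φ x)
        exact hB.hasDerivWithinAt)
      (fun t ht => neg_le_neg (hanti t ⟨hx.1.trans_le ht.1, ht.2.trans hy.2⟩ y hy ht.2.le))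
    have := main (right_mem_Icc.2 hxy.le)
    linarith
  have h1 : (φ z - φ y) / (z - y) ≤ D y := (div_le_iff₀ (by linarith)).2 key1
  have h2 : D y ≤ (φ y - φ x) / (y - x) := (le_div_iff₀ (by linarith)).2 (by linarith)
  exact h1.trans h2

open Set Filter in
/-- A concave function on an open interval has an antitone right derivative. -/
lemma aux_right_deriv_of_concave {p q : ℝ} {φ : ℝ → ℝ}
    (hc : ConcaveOn ℝ (Ioo p q) φ) :
    ∃ D : ℝ → ℝ, (∀ x ∈ Ioo p q, ∀ y ∈ Ioo p q, x ≤ y → D y ≤ D x) ∧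
      ∀ x ∈ Ioo p q, HasDerivWithinAt φ (D x) (Ici x) x := by
  have hslope : ∀ ⦃x y₁ y₂ : ℝ⦄, x ∈ Ioo p q → y₂ ∈ Ioo p q → x < y₁ → y₁ < y₂ →
      slope φ x y₂ ≤ slope φ x y₁ := by
    intro x y₁ y₂ hx hy₂ h1 h2
    have h := hc.slope_anti_adjacent hx hy₂ h1 h2
    rw [slope_def_field, slope_def_field]
    rw [div_le_div_iff₀ (by linarith) (by linarith)]
    rw [div_le_div_iff₀ (by linarith) (by linarith)] at h
    nlinarith [h]
  have hbdd : ∀ x ∈ Ioo p q, BddAbove (slope φ x '' Ioo x q) := by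
    intro x hx
    refine ⟨slope φ ((p + x) / 2) x, ?_⟩
    rintro v ⟨z, hz, rfl⟩
    have hw : (p + x) / 2 ∈ Ioo p q := ⟨by linarith [hx.1], by linarith [hx.1, hx.2]⟩
    have h := hc.slope_anti_adjacent hw ⟨hx.1.trans hz.1, hz.2⟩
      (by linarith [hx.1] : (p + x) / 2 < x) hz.1
    rw [slope_def_field, slope_def_field]
    exact h
  have hne : ∀ x ∈ Ioo p q, (Ioo x q).Nonempty :=
    fun x hx => ⟨(x + q) / 2, by constructor <;> [linarith [hx.2]; linarith [hx.2]]⟩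
  refine ⟨fun x => sSup (slope φ x '' Ioo x q), ?_, ?_⟩
  · intro x hx y hy hxy
    rcases eq_or_lt_of_le hxy with rfl | hlt
    · exact le_refl _
    · have step1 : sSup (slope φ y '' Ioo y q) ≤ slope φ x y := by
        apply csSup_le ((hne y hy).image _)
        rintro v ⟨z, hz, rfl⟩
        have h := hc.slope_anti_adjacent hx ⟨hy.1.trans hz.1, hz.2⟩ hlt hz.1
        rw [slope_def_field, slope_def_field]
        exact h
      have step2 : slope φ x y ≤ sSup (slope φ x '' Ioo x q) :=
        le_csSup (hbdd x hx) (mem_image_of_mem _ ⟨hlt, hy.2⟩)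
      exact step1.trans step2
  · intro x hx
    have hanti' : AntitoneOn (slope φ x) (Ioo x q) := by
      intro y1 h1 y2 h2 h12
      rcases eq_or_lt_of_le h12 with rfl | hlt
      · exact le_refl _
      · exact hslope hx ⟨hx.1.trans h2.1, h2.2⟩ h1.1 hlt
    have htend := hanti'.tendsto_nhdsWithin_Ioo_right (hne x hx) (hbdd x hx)
    rw [hasDerivWithinAt_iff_tendsto_slope, Set.Ici_sdiff_left]
    exact htend

open Real MeasureTheory intervalIntegral in
theorem stmt_8 (a b : ℝ) (hab : a < b) (f : ℝ → ℝ)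
    (hfpos : ∀ x ∈ Set.Ioo a b, 0 < f x)
    (hfint : ∫ x in a..b, f x = 1)
    (F Finv : ℝ → ℝ)
    (hF : ∀ x, F x = ∫ t in a..x, f t)
    (hFinv₁ : ∀ x ∈ Set.Icc a b, Finv (F x) = x)
    (hFinv₂ : ∀ u ∈ Set.Icc (0:ℝ) 1, F (Finv u) = u) :
    ConcaveOn ℝ (Set.Ioo a b) (fun x => Real.log (f x))
      ↔ ConcaveOn ℝ (Set.Ioo (0:ℝ) 1) (fun u => f (Finv u)) := by
  have haI : a ∈ Set.Icc a b := ⟨le_refl a, hab.le⟩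
  have hbI : b ∈ Set.Icc a b := ⟨hab.le, le_refl b⟩
  have hIooIcc : Set.Ioo a b ⊆ Set.Icc a b := Set.Ioo_subset_Icc_self
  have hIooIcc01 : Set.Ioo (0:ℝ) 1 ⊆ Set.Icc (0:ℝ) 1 := Set.Ioo_subset_Icc_self
  -- integrability
  have hInt : IntervalIntegrable f volume a b := by
    by_contra hcon
    rw [intervalIntegral.integral_undef hcon] at hfint
    exact one_ne_zero hfint.symm
  have hIntsub : ∀ x ∈ Set.Icc a b, ∀ y ∈ Set.Icc a b, IntervalIntegrable f volume x y := by
    intro x hx y hy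
    apply hInt.mono_set
    exact Set.uIcc_subset_uIcc (by rwa [Set.uIcc_of_le hab.le]) (by rwa [Set.uIcc_of_le hab.le])
  -- basic F facts
  have hFsub : ∀ x ∈ Set.Icc a b, ∀ y ∈ Set.Icc a b, F y - F x = ∫ t in x..y, f t := by
    intro x hx y hy
    have h := intervalIntegral.integral_add_adjacent_intervals
      (hIntsub a haI x hx) (hIntsub x hx y hy)
    rw [hF x, hF y]
    linarith
  have hFmono : ∀ x ∈ Set.Icc a b, ∀ y ∈ Set.Icc a b, x < y → F x < F y := by
    intro x hx y hy hxy
    have h := hFsub x hx y hy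
    have hpos : 0 < ∫ t in x..y, f t :=
      intervalIntegral.intervalIntegral_pos_of_pos_on (hIntsub x hx y hy)
        (fun t ht => hfpos t ⟨hx.1.trans_lt ht.1, ht.2.trans_le hy.2⟩) hxy
    linarith
  have hFle : ∀ x ∈ Set.Icc a b, ∀ y ∈ Set.Icc a b, x ≤ y → F x ≤ F y := by
    intro x hx y hy hxy
    rcases eq_or_lt_of_le hxy with rfl | h
    · exact le_refl _
    · exact (hFmono x hx y hy h).le
  have hFa : F a = 0 := by rw [hF]; exact intervalIntegral.integral_same
  have hFb : F b = 1 := by rw [hF]; exact hfint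
  have hFcont : ContinuousOn F (Set.Icc a b) := by
    have h_int : IntegrableOn f (Set.uIcc a b) := by
      rw [Set.uIcc_of_le hab.le]
      rwa [← intervalIntegrable_iff_integrableOn_Icc_of_le hab.le]
    have hc := intervalIntegral.continuousOn_primitive_interval (μ := volume) h_int
    rw [Set.uIcc_of_le hab.le] at hc
    exact hc.congr (fun x _ => hF x)
  have hFinvmem : ∀ u ∈ Set.Icc (0:ℝ) 1, Finv u ∈ Set.Icc a b := by
    intro u hu
    obtain ⟨x, hx, hFx⟩ := intermediate_value_Icc hab.le hFcont
      (by rw [hFa, hFb]; exact hu)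
    rw [← hFx, hFinv₁ x hx]
    exact hx
  have hFinvmono : ∀ u ∈ Set.Icc (0:ℝ) 1, ∀ v ∈ Set.Icc (0:ℝ) 1, u ≤ v → Finv u ≤ Finv v := by
    intro u hu v hv huv
    by_contra hlt
    push_neg at hlt
    have h := hFmono _ (hFinvmem v hv) _ (hFinvmem u hu) hlt
    rw [hFinv₂ u hu, hFinv₂ v hv] at h
    linarith
  have hFmaps : ∀ x ∈ Set.Ioo a b, F x ∈ Set.Ioo (0:ℝ) 1 := by
    intro x hx
    constructor
    · rw [← hFa]; exact hFmono a haI x (hIooIcc hx) hx.1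
    · rw [← hFb]; exact hFmono x (hIooIcc hx) b hbI hx.2
  have hFinvmaps : ∀ u ∈ Set.Ioo (0:ℝ) 1, Finv u ∈ Set.Ioo a b := by
    intro u hu
    have hm := hFinvmem u (hIooIcc01 hu)
    constructor
    · rcases eq_or_lt_of_le hm.1 with heq | h
      · exfalso
        have := hFinv₂ u (hIooIcc01 hu)
        rw [← heq, hFa] at this
        linarith [hu.1]
      · exact h
    · rcases eq_or_lt_of_le hm.2 with heq | h
      · exfalso
        have := hFinv₂ u (hIooIcc01 hu)
        rw [heq, hFb] at this
        linarith [hu.2]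
      · exact h
  have hgF : ∀ x ∈ Set.Icc a b, f (Finv (F x)) = f x := fun x hx => by rw [hFinv₁ x hx]
  -- continuity of Finv
  have hFinvcont : ∀ u ∈ Set.Ioo (0:ℝ) 1, ContinuousAt Finv u := by
    intro u hu
    have hx : Finv u ∈ Set.Ioo a b := hFinvmaps u hu
    have huF : F (Finv u) = u := hFinv₂ u (hIooIcc01 hu)
    rw [Metric.continuousAt_iff]
    intro ε hε
    set x := Finv u with hxdef
    set ε' := min (ε / 2) (min ((x - a) / 2) ((b - x) / 2)) with hε'def
    have hε' : 0 < ε' := by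
      apply lt_min (by linarith)
      exact lt_min (by linarith [hx.1]) (by linarith [hx.2])
    have hε'1 : ε' ≤ ε / 2 := min_le_left _ _
    have hε'2 : ε' ≤ (x - a) / 2 := (min_le_right _ _).trans (min_le_left _ _)
    have hε'3 : ε' ≤ (b - x) / 2 := (min_le_right _ _).trans (min_le_right _ _)
    have hxl : x - ε' ∈ Set.Icc a b := ⟨by linarith, by linarith [hx.2]⟩
    have hxr : x + ε' ∈ Set.Icc a b := ⟨by linarith [hx.1], by linarith⟩
    have h1 : F (x - ε') < u := by
      have := hFmono _ hxl _ (hIooIcc hx) (by linarith)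
      rwa [huF] at this
    have h2 : u < F (x + ε') := by
      have := hFmono _ (hIooIcc hx) _ hxr (by linarith)
      rwa [huF] at this
    refine ⟨min (u - F (x - ε')) (F (x + ε') - u), lt_min (by linarith) (by linarith), ?_⟩
    intro v hv
    rw [Real.dist_eq] at hv ⊢
    have hv' := abs_lt.mp hv
    have hv1 : F (x - ε') < v := by
      have := min_le_left (u - F (x - ε')) (F (x + ε') - u)
      linarith [hv'.1]
    have hv2 : v < F (x + ε') := by
      have := min_le_right (u - F (x - ε')) (F (x + ε') - u)
      linarith [hv'.2]
    have hv01 : v ∈ Set.Icc (0:ℝ) 1 := by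
      constructor
      · have : F a ≤ F (x - ε') := hFle a haI _ hxl hxl.1
        rw [hFa] at this; linarith
      · have : F (x + ε') ≤ F b := hFle _ hxr b hbI hxr.2
        rw [hFb] at this; linarith
    have hfv := hFinvmem v hv01
    have l1 : x - ε' < Finv v := by
      by_contra hcon
      push_neg at hcon
      have := hFle _ hfv _ hxl hcon
      rw [hFinv₂ v hv01] at this
      linarith
    have l2 : Finv v < x + ε' := by
      by_contra hcon
      push_neg at hcon
      have := hFle _ hxr _ hfv hcon
      rw [hFinv₂ v hv01] at this
      linarith
    rw [abs_lt]
    constructor <;> [linarith; linarith]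
  -- derivatives (given continuity of f)
  have hFderiv : ContinuousOn f (Set.Ioo a b) → ∀ x ∈ Set.Ioo a b, HasDerivAt F (f x) x := by
    intro hcf x hx
    have hca : ContinuousAt f x := hcf.continuousAt (isOpen_Ioo.mem_nhds hx)
    have hmeas := hcf.stronglyMeasurableAtFilter (μ := volume) isOpen_Ioo x hx
    have h := intervalIntegral.integral_hasDerivAt_right
      (hIntsub a haI x (hIooIcc hx)) hmeas hca
    have heq : F = fun y => ∫ t in a..y, f t := funext hF
    rw [heq]
    exact h
  have hFinvderiv : ContinuousOn f (Set.Ioo a b) →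
      ∀ u ∈ Set.Ioo (0:ℝ) 1, HasDerivAt Finv (f (Finv u))⁻¹ u := by
    intro hcf u hu
    have hx := hFinvmaps u hu
    refine HasDerivAt.of_local_left_inverse (hFinvcont u hu)
      (hFderiv hcf _ hx) (ne_of_gt (hfpos _ hx)) ?_
    filter_upwards [isOpen_Ioo.mem_nhds hu] with v hv using hFinv₂ v (hIooIcc01 hv)
  constructor
  · -- log f concave → f ∘ Finv concave
    intro h
    have hch : ContinuousOn (fun x => Real.log (f x)) (Set.Ioo a b) :=
      h.continuousOn isOpen_Ioo
    have hcf : ContinuousOn f (Set.Ioo a b) := by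
      have h2 : ContinuousOn (fun x => Real.exp (Real.log (f x))) (Set.Ioo a b) :=
        Real.continuous_exp.comp_continuousOn hch
      exact h2.congr fun x hx => (Real.exp_log (hfpos x hx)).symm
    obtain ⟨D, hDanti, hDderiv⟩ := aux_right_deriv_of_concave h
    refine aux_concave_of_right_deriv (D := fun u => D (Finv u)) ?_ ?_ ?_
    · intro u hu
      exact ((hcf.continuousAt (isOpen_Ioo.mem_nhds (hFinvmaps u hu))).comp
        (hFinvcont u hu)).continuousWithinAt
    · intro u hu
      have hx : Finv u ∈ Set.Ioo a b := hFinvmaps u hu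
      have h1 : HasDerivWithinAt (fun t => Real.log (f t)) (D (Finv u))
          (Set.Ici (Finv u) ∩ Set.Ioo a b) (Finv u) :=
        (hDderiv _ hx).mono Set.inter_subset_left
      have h2 : HasDerivWithinAt f (f (Finv u) * D (Finv u))
          (Set.Ici (Finv u) ∩ Set.Ioo a b) (Finv u) := by
        have hcomp := (Real.hasDerivAt_exp (Real.log (f (Finv u)))).comp_hasDerivWithinAt
          (Finv u) h1
        rw [Real.exp_log (hfpos _ hx)] at hcomp
        exact hcomp.congr (fun y hy => (Real.exp_log (hfpos y hy.2)).symm)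
          (Real.exp_log (hfpos _ hx)).symm
      have h3 : HasDerivWithinAt Finv (f (Finv u))⁻¹
          (Set.Ici u ∩ Set.Ioo (0:ℝ) 1) u := (hFinvderiv hcf u hu).hasDerivWithinAt
      have hmaps : Set.MapsTo Finv (Set.Ici u ∩ Set.Ioo (0:ℝ) 1)
          (Set.Ici (Finv u) ∩ Set.Ioo a b) := fun v hv =>
        ⟨hFinvmono u (hIooIcc01 hu) v (hIooIcc01 hv.2) hv.1, hFinvmaps v hv.2⟩
      have h4 := h2.comp u h3 hmaps
      have h5 : HasDerivWithinAt (fun v => f (Finv v)) (D (Finv u))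
          (Set.Ici u ∩ Set.Ioo (0:ℝ) 1) u := by
        have : f (Finv u) * D (Finv u) * (f (Finv u))⁻¹ = D (Finv u) := by
          have hne : f (Finv u) ≠ 0 := ne_of_gt (hfpos _ hx)
          field_simp
        rw [← this]
        exact h4
      exact h5.mono_of_mem_nhdsWithin (Filter.inter_mem self_mem_nhdsWithin
        (mem_nhdsWithin_of_mem_nhds (isOpen_Ioo.mem_nhds hu)))
    · intro u hu v hv huv
      exact hDanti _ (hFinvmaps u hu) _ (hFinvmaps v hv)
        (hFinvmono u (hIooIcc01 hu) v (hIooIcc01 hv) huv)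
  · -- f ∘ Finv concave → log f concave
    intro h
    have hcg : ContinuousOn (fun u => f (Finv u)) (Set.Ioo (0:ℝ) 1) :=
      h.continuousOn isOpen_Ioo
    have hcf : ContinuousOn f (Set.Ioo a b) := by
      have h2 : ContinuousOn (fun x => f (Finv (F x))) (Set.Ioo a b) := by
        intro x hx
        have hFatx : ContinuousAt F x :=
          (hFcont.continuousWithinAt (hIooIcc hx)).continuousAt
            (Icc_mem_nhds hx.1 hx.2)
        exact ((hcg.continuousAt (isOpen_Ioo.mem_nhds (hFmaps x hx))).comp
          hFatx).continuousWithinAt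
      exact h2.congr fun x hx => (hgF x (hIooIcc hx)).symm
    obtain ⟨D, hDanti, hDderiv⟩ := aux_right_deriv_of_concave h
    refine aux_concave_of_right_deriv (D := fun x => D (F x)) ?_ ?_ ?_
    · intro x hx
      exact ((Real.continuousAt_log (ne_of_gt (hfpos x hx))).comp
        (hcf.continuousAt (isOpen_Ioo.mem_nhds hx))).continuousWithinAt
    · intro x hx
      have hu : F x ∈ Set.Ioo (0:ℝ) 1 := hFmaps x hx
      have h1 : HasDerivWithinAt (fun v => f (Finv v)) (D (F x))
          (Set.Ici (F x) ∩ Set.Ioo (0:ℝ) 1) (F x) :=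
        (hDderiv _ hu).mono Set.inter_subset_left
      have h2 : HasDerivWithinAt F (f x) (Set.Ici x ∩ Set.Ioo a b) x :=
        (hFderiv hcf x hx).hasDerivWithinAt
      have hmaps : Set.MapsTo F (Set.Ici x ∩ Set.Ioo a b)
          (Set.Ici (F x) ∩ Set.Ioo (0:ℝ) 1) := fun y hy =>
        ⟨hFle x (hIooIcc hx) y (hIooIcc hy.2) hy.1, hFmaps y hy.2⟩
      have h3 := h1.comp x h2 hmaps
      have h4 := (Real.hasDerivAt_log
        (by rw [hgF x (hIooIcc hx)]; exact ne_of_gt (hfpos x hx) :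
          f (Finv (F x)) ≠ 0)).comp_hasDerivWithinAt x h3
      have h5 : HasDerivWithinAt (fun y => Real.log (f y)) (D (F x))
          (Set.Ici x ∩ Set.Ioo a b) x := by
        have hval : (f (Finv (F x)))⁻¹ * (D (F x) * f x) = D (F x) := by
          have hne : f x ≠ 0 := ne_of_gt (hfpos x hx)
          rw [hgF x (hIooIcc hx)]
          field_simp
        rw [← hval]
        exact h4.congr (fun y hy => by rw [Function.comp, Function.comp, hgF y (hIooIcc hy.2)])
          (by rw [Function.comp, Function.comp, hgF x (hIooIcc hx)])
      exact h5.mono_of_mem_nhdsWithin (Filter.inter_mem self_mem_nhdsWithin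
        (mem_nhdsWithin_of_mem_nhds (isOpen_Ioo.mem_nhds hx)))
    · intro x hx y hy hxy
      exact hDanti _ (hFmaps x hx) _ (hFmaps y hy)
        (hFle x (hIooIcc hx) y (hIooIcc hy) hxy)
end

section
/- Let f : (a,b) → (0,∞) be a positive probability density on a bounded interval with c.d.f. F and quantile function F^{-1}. Then f is strictly log-concave on (a,b) if and only if f ∘ F^{-1} is strictly concave on (0,1). -/
/-!
Write `g = f ∘ F⁻¹`. Formally `(log f)' = f' / f = (g' ∘ F) · F' / f = g' ∘ F` because `F' = f`,
and this holds for right derivatives as soon as one of `log f`, `g` is concave: the right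
derivative of `log f` at `x` is the right derivative of `g` at `F x`. On an open interval the
strictly concave functions are exactly the continuous functions with a strictly decreasing right
derivative, and `F` is an increasing bijection from `(a, b)` onto `(0, 1)`, so `log f` and `g`
are strictly concave together.
-/

open Real Set Filter Topology MeasureTheory

lemma image_sub_le_mul_sub_of_deriv_right_le {h h' : ℝ → ℝ} {s t K : ℝ} (hst : s ≤ t)
    (hc : ContinuousOn h (Icc s t)) (hd : ∀ x ∈ Ico s t, HasDerivWithinAt h (h' x) (Ici x) x)
    (hK : ∀ x ∈ Ico s t, h' x ≤ K) :
    h t - h s ≤ K * (t - s) := by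
  have hB : ∀ x, HasDerivAt (fun x => h s + K * (x - s)) K x := fun x => by
    simpa using (((hasDerivAt_id x).sub_const s).const_mul K).const_add (h s)
  have := image_le_of_deriv_right_le_deriv_boundary hc hd (by simp)
    (fun x _ => (hB x).continuousAt.continuousWithinAt) (fun x _ => (hB x).hasDerivWithinAt) hK
    (right_mem_Icc.2 hst)
  linarith

lemma mul_sub_le_image_sub_of_le_deriv_right {h h' : ℝ → ℝ} {s t K : ℝ} (hst : s ≤ t)
    (hc : ContinuousOn h (Icc s t)) (hd : ∀ x ∈ Ico s t, HasDerivWithinAt h (h' x) (Ici x) x)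
    (hK : ∀ x ∈ Ico s t, K ≤ h' x) :
    K * (t - s) ≤ h t - h s := by
  have := image_sub_le_mul_sub_of_deriv_right_le (h' := -h') hst hc.neg
    (fun x hx => (hd x hx).neg) (fun x hx => neg_le_neg (hK x hx))
  simp only [Pi.neg_apply] at this
  linarith

theorem StrictAntiOn.strictConcaveOn_of_hasDerivWithinAt_Ici {a b : ℝ} {h h' : ℝ → ℝ}
    (hanti : StrictAntiOn h' (Ioo a b)) (hc : ContinuousOn h (Ioo a b))
    (hd : ∀ x ∈ Ioo a b, HasDerivWithinAt h (h' x) (Ici x) x) :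
    StrictConcaveOn ℝ (Ioo a b) h := by
  refine strictConcaveOn_iff_slope_strict_anti_adjacent.2
    ⟨convex_Ioo a b, fun x y z hx hz hxy hyz => ?_⟩
  have hy : y ∈ Ioo a b := ⟨hx.1.trans hxy, hyz.trans hz.2⟩
  -- the intermediate point `m` makes the lower estimate on `[x, y]` strict
  obtain ⟨m, hxm, hmy⟩ := exists_between hxy
  have hm : m ∈ Ioo a b := ⟨hx.1.trans hxm, hmy.trans hy.2⟩
  have hsub : ∀ {s t}, s ∈ Ioo a b → t ∈ Ioo a b → Icc s t ⊆ Ioo a b :=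
    fun hs ht => Icc_subset_Ioo hs.1 ht.2
  have hcont : ∀ {s t}, s ∈ Ioo a b → t ∈ Ioo a b → ContinuousOn h (Icc s t) :=
    fun hs ht => hc.mono (hsub hs ht)
  have hder : ∀ {s t}, s ∈ Ioo a b → t ∈ Ioo a b →
      ∀ r ∈ Ico s t, HasDerivWithinAt h (h' r) (Ici r) r :=
    fun hs ht r hr => hd r (hsub hs ht (Ico_subset_Icc_self hr))
  have hright : h z - h y ≤ h' y * (z - y) :=
    image_sub_le_mul_sub_of_deriv_right_le hyz.le (hcont hy hz) (hder hy hz) fun r hr =>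
      hanti.antitoneOn hy (hsub hy hz (Ico_subset_Icc_self hr)) hr.1
  have hleft₁ : h' m * (m - x) ≤ h m - h x :=
    mul_sub_le_image_sub_of_le_deriv_right hxm.le (hcont hx hm) (hder hx hm) fun r hr =>
      hanti.antitoneOn (hsub hx hm (Ico_subset_Icc_self hr)) hm hr.2.le
  have hleft₂ : h' y * (y - m) ≤ h y - h m :=
    mul_sub_le_image_sub_of_le_deriv_right hmy.le (hcont hm hy) (hder hm hy) fun r hr =>
      hanti.antitoneOn (hsub hm hy (Ico_subset_Icc_self hr)) hy hr.2.le
  have hmy' : h' y * (m - x) < h' m * (m - x) :=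
    mul_lt_mul_of_pos_right (hanti hm hy hmy) (sub_pos.2 hxm)
  calc (h z - h y) / (z - y) ≤ h' y := (div_le_iff₀ (sub_pos.2 hyz)).2 hright
    _ < (h y - h x) / (y - x) := (lt_div_iff₀ (sub_pos.2 hxy)).2 (by linarith)

lemma ConcaveOn.hasDerivWithinAt_Ici_rightDeriv {S : Set ℝ} {h : ℝ → ℝ} {x : ℝ}
    (hh : ConcaveOn ℝ S h) (hx : x ∈ interior S) :
    HasDerivWithinAt h (derivWithin h (Ioi x) x) (Ici x) x := by
  have := (hh.neg.differentiableWithinAt_Ioi_of_mem_interior hx).neg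
  rw [neg_neg] at this
  exact hasDerivWithinAt_Ioi_iff_Ici.1 this.hasDerivWithinAt

lemma StrictConcaveOn.strictAntiOn_rightDeriv {S : Set ℝ} {h : ℝ → ℝ}
    (hh : StrictConcaveOn ℝ S h) :
    StrictAntiOn (fun x => derivWithin h (Ioi x) x) (interior S) := by
  intro x hx y hy hxy
  have hconv := hh.concaveOn.neg
  have key : derivWithin (-h) (Ioi x) x < derivWithin (-h) (Ioi y) y :=
    calc derivWithin (-h) (Ioi x) x < slope (-h) x y :=
          hh.neg.rightDeriv_lt_slope (interior_subset hx) (interior_subset hy) hxy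
            (hconv.differentiableWithinAt_Ioi_of_mem_interior hx)
      _ ≤ derivWithin (-h) (Iio y) y :=
          hconv.slope_le_leftDeriv (interior_subset hx) (interior_subset hy) hxy
            (hconv.differentiableWithinAt_Iio_of_mem_interior hy)
      _ ≤ derivWithin (-h) (Ioi y) y := hconv.leftDeriv_le_rightDeriv_of_mem_interior hy
  simpa only [derivWithin.neg, neg_lt_neg_iff] using key

lemma HasDerivWithinAt.comp_Ici_of_monotoneOn {g F : ℝ → ℝ} {g' F' x t : ℝ}
    (hg : HasDerivWithinAt g g' (Ici (F x)) (F x)) (hF : HasDerivAt F F' x) (hxt : x < t)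
    (hFm : MonotoneOn F (Ico x t)) :
    HasDerivWithinAt (g ∘ F) (g' * F') (Ici x) x :=
  (hg.comp x hF.hasDerivWithinAt fun _ hy => hFm (left_mem_Ico.2 hxt) hy hy.1)
    |>.mono_of_mem_nhdsWithin (Ico_mem_nhdsGE hxt)

lemma HasDerivWithinAt.of_log {f : ℝ → ℝ} {s : Set ℝ} {x d : ℝ}
    (hd : HasDerivWithinAt (fun y => Real.log (f y)) d s x) (hf : ∀ᶠ y in 𝓝 x, 0 < f y) :
    HasDerivWithinAt f (f x * d) s x := by
  have hexp := hd.exp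
  rw [exp_log hf.self_of_nhds] at hexp
  exact hexp.congr_of_eventuallyEq (eventually_nhdsWithin_of_eventually_nhds <|
    hf.mono fun y hy => (exp_log hy).symm) (exp_log hf.self_of_nhds).symm

section ChangeOfVariables

variable {a b c d : ℝ} {f F G : ℝ → ℝ}

lemma strictConcaveOn_comp_of_strictConcaveOn_log (hf : ∀ x ∈ Ioo a b, 0 < f x)
    (hFd : ∀ x ∈ Ioo a b, HasDerivAt F (f x) x) (hFm : StrictMonoOn F (Ioo a b))
    (hFim : F '' Ioo a b = Ioo c d) (hGF : ∀ x ∈ Ioo a b, G (F x) = x)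
    (hφ : StrictConcaveOn ℝ (Ioo a b) fun x => log (f x)) :
    StrictConcaveOn ℝ (Ioo c d) fun u => f (G u) := by
  have hG : ∀ u ∈ Ioo c d, G u ∈ Ioo a b ∧ F (G u) = u := by
    intro u hu
    obtain ⟨x, hx, rfl⟩ := hFim.symm ▸ hu
    rw [hGF x hx]
    exact ⟨hx, rfl⟩
  have hGmaps : MapsTo G (Ioo c d) (Ioo a b) := fun u hu => (hG u hu).1
  have hGm : StrictMonoOn G (Ioo c d) := fun u hu v hv huv => by
    rwa [← hFm.lt_iff_lt (hG u hu).1 (hG v hv).1, (hG u hu).2, (hG v hv).2]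
  have hGim : G '' Ioo c d = Ioo a b := by
    refine hGmaps.image_subset.antisymm fun x hx => ⟨F x, ?_, hGF x hx⟩
    exact hFim ▸ mem_image_of_mem F hx
  have hGd : ∀ u ∈ Ioo c d, HasDerivAt G (f (G u))⁻¹ u := fun u hu =>
    HasDerivAt.of_local_left_inverse
      (continuousAt_of_monotoneOn_of_image_mem_nhds hGm.monotoneOn (isOpen_Ioo.mem_nhds hu)
        (hGim ▸ isOpen_Ioo.mem_nhds (hG u hu).1))
      (hFd _ (hG u hu).1) (hf _ (hG u hu).1).ne'
      (eventually_of_mem (isOpen_Ioo.mem_nhds hu) fun v hv => (hG v hv).2)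
  set D := fun x => derivWithin (fun x => log (f x)) (Ioi x) x
  have hDanti : StrictAntiOn D (Ioo a b) := by
    simpa only [interior_Ioo] using hφ.strictAntiOn_rightDeriv
  have hfc : ContinuousOn f (Ioo a b) :=
    (hφ.concaveOn.continuousOn isOpen_Ioo).rexp.congr fun x hx => (exp_log (hf x hx)).symm
  refine (hDanti.comp_strictMonoOn hGm hGmaps).strictConcaveOn_of_hasDerivWithinAt_Ici
    (hfc.comp (fun u hu => (hGd u hu).continuousAt.continuousWithinAt) hGmaps) fun u hu => ?_
  have hx := (hG u hu).1
  have hfd : HasDerivWithinAt f (f (G u) * D (G u)) (Ici (G u)) (G u) :=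
    (hφ.concaveOn.hasDerivWithinAt_Ici_rightDeriv (by rwa [interior_Ioo])).of_log
      (eventually_of_mem (isOpen_Ioo.mem_nhds hx) hf)
  have hd := hfd.comp_Ici_of_monotoneOn (hGd u hu) hu.2
    (hGm.monotoneOn.mono (Ico_subset_Ioo_left hu.1))
  rwa [mul_right_comm, mul_inv_cancel₀ (hf _ hx).ne', one_mul] at hd

lemma strictConcaveOn_log_of_strictConcaveOn_comp (hf : ∀ x ∈ Ioo a b, 0 < f x)
    (hFd : ∀ x ∈ Ioo a b, HasDerivAt F (f x) x) (hFm : StrictMonoOn F (Ioo a b))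
    (hFmaps : MapsTo F (Ioo a b) (Ioo c d)) (hGF : ∀ x ∈ Ioo a b, G (F x) = x)
    (hg : StrictConcaveOn ℝ (Ioo c d) fun u => f (G u)) :
    StrictConcaveOn ℝ (Ioo a b) fun x => log (f x) := by
  set g := fun u => f (G u)
  have hfg : ∀ x ∈ Ioo a b, f x = g (F x) := fun x hx => by simp only [g, hGF x hx]
  set D := fun u => derivWithin g (Ioi u) u
  have hDanti : StrictAntiOn D (Ioo c d) := by
    simpa only [interior_Ioo] using hg.strictAntiOn_rightDeriv
  have hfc : ContinuousOn f (Ioo a b) :=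
    ((hg.concaveOn.continuousOn isOpen_Ioo).comp
      (fun x hx => (hFd x hx).continuousAt.continuousWithinAt) hFmaps).congr hfg
  refine (hDanti.comp_strictMonoOn hFm hFmaps).strictConcaveOn_of_hasDerivWithinAt_Ici
    (hfc.log fun x hx => (hf x hx).ne') fun x hx => ?_
  have hgd := hg.concaveOn.hasDerivWithinAt_Ici_rightDeriv (x := F x)
    (by rw [interior_Ioo]; exact hFmaps hx)
  have hfd : HasDerivWithinAt f (D (F x) * f x) (Ici x) x :=
    (hgd.comp_Ici_of_monotoneOn (hFd x hx) hx.2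
      (hFm.monotoneOn.mono (Ico_subset_Ioo_left hx.1))).congr_of_eventuallyEq
      (eventually_nhdsWithin_of_eventually_nhds <|
        eventually_of_mem (isOpen_Ioo.mem_nhds hx) hfg) (hfg x hx)
  have hd := hfd.log (hf x hx).ne'
  rwa [mul_div_cancel_right₀ _ (hf x hx).ne'] at hd

end ChangeOfVariables

section Primitive

variable {a b : ℝ} {f : ℝ → ℝ}

lemma strictMonoOn_primitive (hfi : IntervalIntegrable f volume a b)
    (hf : ∀ x ∈ Ioo a b, 0 < f x) :
    StrictMonoOn (fun x => ∫ t in a..x, f t) (Icc a b) := by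
  have hsub : ∀ {s t}, s ∈ Icc a b → t ∈ Icc a b → IntervalIntegrable f volume s t :=
    fun hs ht => hfi.mono_set (uIcc_subset_uIcc (Icc_subset_uIcc hs) (Icc_subset_uIcc ht))
  intro x hx y hy hxy
  have ha : a ∈ Icc a b := ⟨le_rfl, hx.1.trans hx.2⟩
  rw [← sub_pos, intervalIntegral.integral_interval_sub_left (hsub ha hy) (hsub ha hx)]
  exact intervalIntegral.intervalIntegral_pos_of_pos_on (hsub hx hy)
    (fun t ht => hf t ⟨hx.1.trans_lt ht.1, ht.2.trans_le hy.2⟩) hxy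

lemma continuousOn_primitive (hfi : IntervalIntegrable f volume a b) :
    ContinuousOn (fun x => ∫ t in a..x, f t) (Icc a b) :=
  (intervalIntegral.continuousOn_primitive_interval' hfi left_mem_uIcc).mono Icc_subset_uIcc

lemma hasDerivAt_primitive (hfi : IntervalIntegrable f volume a b)
    (hfc : ContinuousOn f (Ioo a b)) {x : ℝ} (hx : x ∈ Ioo a b) :
    HasDerivAt (fun x => ∫ t in a..x, f t) (f x) x :=
  intervalIntegral.integral_hasDerivAt_right
    (hfi.mono_set (uIcc_subset_uIcc left_mem_uIcc (Icc_subset_uIcc (Ioo_subset_Icc_self hx))))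
    (hfc.stronglyMeasurableAtFilter isOpen_Ioo x hx) (hfc.continuousAt (isOpen_Ioo.mem_nhds hx))

end Primitive

open Real MeasureTheory intervalIntegral in
theorem stmt_9_general (a b : ℝ) (hab : a < b) (f : ℝ → ℝ)
    (hfpos : ∀ x ∈ Set.Ioo a b, 0 < f x)
    (hfint : ∫ x in a..b, f x = 1)
    (F Finv : ℝ → ℝ)
    (hF : ∀ x, F x = ∫ t in a..x, f t)
    (hFinv₁ : ∀ x ∈ Set.Icc a b, Finv (F x) = x) :
    StrictConcaveOn ℝ (Set.Ioo a b) (fun x => Real.log (f x))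
      ↔ StrictConcaveOn ℝ (Set.Ioo (0:ℝ) 1) (fun u => f (Finv u)) := by
  have hFeq : F = fun x => ∫ t in a..x, f t := funext hF
  have hfi : IntervalIntegrable f volume a b :=
    intervalIntegrable_of_integral_ne_zero (by simp [hfint])
  have hFm : StrictMonoOn F (Icc a b) := hFeq ▸ strictMonoOn_primitive hfi hfpos
  have hFc : ContinuousOn F (Icc a b) := hFeq ▸ continuousOn_primitive hfi
  have hFim : F '' Ioo a b = Ioo 0 1 := by
    rw [hFc.image_Ioo_of_strictMonoOn hab.le hFm, hF, hF, hfint, integral_same]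
  have hFmaps : MapsTo F (Ioo a b) (Ioo 0 1) := hFim ▸ mapsTo_image F _
  have hFd : ContinuousOn f (Ioo a b) → ∀ x ∈ Ioo a b, HasDerivAt F (f x) x :=
    fun hfc x hx => hFeq ▸ hasDerivAt_primitive hfi hfc hx
  have hGF : ∀ x ∈ Ioo a b, Finv (F x) = x := fun x hx => hFinv₁ x (Ioo_subset_Icc_self hx)
  constructor
  · intro hφ
    have hfc : ContinuousOn f (Ioo a b) :=
      (hφ.concaveOn.continuousOn isOpen_Ioo).rexp.congr fun x hx => (exp_log (hfpos x hx)).symm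
    exact strictConcaveOn_comp_of_strictConcaveOn_log hfpos (hFd hfc)
      (hFm.mono Ioo_subset_Icc_self) hFim hGF hφ
  · intro hg
    have hfc : ContinuousOn f (Ioo a b) :=
      ((hg.concaveOn.continuousOn isOpen_Ioo).comp (hFc.mono Ioo_subset_Icc_self) hFmaps).congr
        fun x hx => by simp only [Function.comp_apply, hGF x hx]
    exact strictConcaveOn_log_of_strictConcaveOn_comp hfpos (hFd hfc)
      (hFm.mono Ioo_subset_Icc_self) hFmaps hGF hg

open Real MeasureTheory intervalIntegral in
theorem stmt_9 (a b : ℝ) (hab : a < b) (f : ℝ → ℝ)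
    (hfpos : ∀ x ∈ Set.Ioo a b, 0 < f x)
    (hfint : ∫ x in a..b, f x = 1)
    (F Finv : ℝ → ℝ)
    (hF : ∀ x, F x = ∫ t in a..x, f t)
    (hFinv₁ : ∀ x ∈ Set.Icc a b, Finv (F x) = x)
    (hFinv₂ : ∀ u ∈ Set.Icc (0:ℝ) 1, F (Finv u) = u) :
    StrictConcaveOn ℝ (Set.Ioo a b) (fun x => Real.log (f x))
      ↔ StrictConcaveOn ℝ (Set.Ioo (0:ℝ) 1) (fun u => f (Finv u)) :=
  stmt_9_general a b hab f hfpos hfint F Finv hF hFinv₁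
end

section
/- Let f be a continuous probability density on (a,b) that is strictly log-concave, with c.d.f. F, and let a ≤ y < z ≤ b. Then f(F^{-1}((1/(z−y)) ∫_y^z F(ξ)dξ)) > (F(z) − F(y))/(z − y). -/
set_option maxHeartbeats 1000000

open Real MeasureTheory intervalIntegral in
lemma aux_exp_int (c w p q : ℝ) (hc : c ≠ 0) :
    ∫ t in p..q, Real.exp (c * (t - w)) =
      (Real.exp (c * (q - w)) - Real.exp (c * (p - w))) / c := by
  have hd : ∀ t ∈ Set.uIcc p q,
      HasDerivAt (fun t => Real.exp (c * (t - w)) / c) (Real.exp (c * (t - w))) t := by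
    intro t _
    have h1 : HasDerivAt (fun t : ℝ => c * (t - w)) c t := by
      simpa using ((hasDerivAt_id t).sub_const w).const_mul c
    have h2 := (h1.exp).div_const c
    simpa [mul_div_cancel_right₀ _ hc] using h2
  have hi : IntervalIntegrable (fun t => Real.exp (c * (t - w))) volume p q := by
    apply Continuous.intervalIntegrable
    fun_prop
  rw [integral_eq_sub_of_hasDerivAt hd hi]
  ring

open Real MeasureTheory intervalIntegral in
theorem stmt_10 (a b : ℝ) (hab : a < b) (f : ℝ → ℝ)
    (hfpos : ∀ x ∈ Set.Ioo a b, 0 < f x)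
    (hfcont : ContinuousOn f (Set.Ioo a b))
    (hfint : ∫ x in a..b, f x = 1)
    (hflogconc : StrictConcaveOn ℝ (Set.Ioo a b) (fun x => Real.log (f x)))
    (F Finv : ℝ → ℝ)
    (hF : ∀ x, F x = ∫ t in a..x, f t)
    (hFinv₁ : ∀ x ∈ Set.Icc a b, Finv (F x) = x)
    (hFinv₂ : ∀ u ∈ Set.Icc (0:ℝ) 1, F (Finv u) = u)
    (y z : ℝ) (hy : a ≤ y) (hyz : y < z) (hzb : z ≤ b) :
    (F z - F y) / (z - y) < f (Finv ((1 / (z - y)) * ∫ ξ in y..z, F ξ)) := by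
  have hzy : (0:ℝ) < z - y := by linarith
  -- f is interval integrable on [a, b]
  have hIntab : IntervalIntegrable f volume a b := by
    by_contra h
    rw [intervalIntegral.integral_undef h] at hfint
    norm_num at hfint
  have huab : Set.uIcc a b = Set.Icc a b := Set.uIcc_of_le hab.le
  have hIntsub : ∀ p ∈ Set.Icc a b, ∀ q ∈ Set.Icc a b, IntervalIntegrable f volume p q := by
    intro p hp q hq
    exact hIntab.mono_set
      (Set.uIcc_subset_uIcc (by rw [huab]; exact hp) (by rw [huab]; exact hq))
  -- difference of F is an integral
  have Fdiff : ∀ p ∈ Set.Icc a b, ∀ q ∈ Set.Icc a b, F q - F p = ∫ t in p..q, f t := by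
    intro p hp q hq
    have h1 := intervalIntegral.integral_add_adjacent_intervals
      (hIntsub a (Set.left_mem_Icc.mpr hab.le) p hp) (hIntsub p hp q hq)
    rw [hF p, hF q]
    linarith
  -- F is continuous on [a, b]
  have FcontOn : ContinuousOn F (Set.Icc a b) := by
    have := intervalIntegral.continuousOn_primitive_interval' hIntab
      (by rw [huab]; exact Set.left_mem_Icc.mpr hab.le)
    rw [huab] at this
    exact this.congr (fun x _ => hF x)
  -- F is strictly monotone on [a, b]
  have Fmono : ∀ p ∈ Set.Icc a b, ∀ q ∈ Set.Icc a b, p < q → F p < F q := by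
    intro p hp q hq hpq
    have h1 : (0:ℝ) < ∫ t in p..q, f t := by
      apply intervalIntegral_pos_of_pos_on (hIntsub p hp q hq) _ hpq
      intro t ht
      exact hfpos t ⟨lt_of_le_of_lt hp.1 ht.1, lt_of_lt_of_le ht.2 hq.2⟩
    have := Fdiff p hp q hq
    linarith
  have hyab : y ∈ Set.Icc a b := ⟨hy, le_trans hyz.le hzb⟩
  have hzab : z ∈ Set.Icc a b := ⟨le_trans hy hyz.le, hzb⟩
  have hmemab : ∀ t, y ≤ t → t ≤ z → t ∈ Set.Icc a b := by
    intro t h1 h2; exact ⟨le_trans hy h1, le_trans h2 hzb⟩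
  have FIntyz : IntervalIntegrable F volume y z := by
    apply ContinuousOn.intervalIntegrable
    apply FcontOn.mono
    rw [Set.uIcc_of_le hyz.le]
    exact fun t ht => hmemab t ht.1 ht.2
  set m := (1 / (z - y)) * ∫ ξ in y..z, F ξ with hm
  have hintF : ∫ ξ in y..z, F ξ = m * (z - y) := by
    rw [hm]; field_simp
  -- m is strictly between F y and F z
  have hm1 : F y < m := by
    have h1 : (0:ℝ) < ∫ ξ in y..z, (F ξ - F y) := by
      apply intervalIntegral_pos_of_pos_on (FIntyz.sub (intervalIntegrable_const)) _ hyz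
      intro t ht
      have := Fmono y hyab t (hmemab t ht.1.le ht.2.le) ht.1
      linarith
    rw [intervalIntegral.integral_sub FIntyz intervalIntegrable_const,
      intervalIntegral.integral_const, hintF] at h1
    simp only [smul_eq_mul] at h1
    nlinarith
  have hm2 : m < F z := by
    have h1 : (0:ℝ) < ∫ ξ in y..z, (F z - F ξ) := by
      apply intervalIntegral_pos_of_pos_on (intervalIntegrable_const.sub FIntyz) _ hyz
      intro t ht
      have := Fmono t (hmemab t ht.1.le ht.2.le) z hzab ht.2
      linarith
    rw [intervalIntegral.integral_sub intervalIntegrable_const FIntyz,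
      intervalIntegral.integral_const, hintF] at h1
    simp only [smul_eq_mul] at h1
    nlinarith
  -- find w with F w = m by the intermediate value theorem
  obtain ⟨w, hwIoo, hFw⟩ : ∃ w ∈ Set.Ioo y z, F w = m := by
    have := intermediate_value_Ioo hyz.le (FcontOn.mono (fun t ht => hmemab t ht.1 ht.2))
    obtain ⟨w, hw1, hw2⟩ := this ⟨hm1, hm2⟩
    exact ⟨w, hw1, hw2⟩
  have hwab : w ∈ Set.Icc a b := hmemab w hwIoo.1.le hwIoo.2.le
  have hwIab : w ∈ Set.Ioo a b := ⟨lt_of_le_of_lt hy hwIoo.1, lt_of_lt_of_le hwIoo.2 hzb⟩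
  have hFinvm : Finv m = w := by rw [← hFw]; exact hFinv₁ w hwab
  rw [hFinvm]
  rw [div_lt_iff₀ hzy]

  -- it remains to show F z - F y < f w * (z - y)
  set ℓ : ℝ → ℝ := fun x => Real.log (f x) with hℓ
  set sl : ℝ → ℝ := fun x => (ℓ x - ℓ w) / (x - w) with hsl
  have hfw : 0 < f w := hfpos w hwIab
  have hsec : ∀ p ∈ Set.Ioo a b, ∀ q ∈ Set.Ioo a b, p ≠ w → q ≠ w → p < q →
      sl q < sl p := by
    intro p hp q hq hpw hqw hpq
    exact hflogconc.secant_strict_mono hwIab hp hq hpw hqw hpq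
  set S : Set ℝ := sl '' Set.Ioo w b with hS
  have hSne : S.Nonempty :=
    ⟨sl ((w + b) / 2), ⟨(w + b) / 2, ⟨by linarith [hwIab.2], by linarith [hwIab.2]⟩, rfl⟩⟩
  have haw : a < w := hwIab.1
  have hwb : w < b := hwIab.2
  have hawm : (a + w) / 2 ∈ Set.Ioo a b := ⟨by linarith, by linarith⟩
  have hSbdd : BddAbove S := by
    refine ⟨sl ((a + w) / 2), ?_⟩
    rintro v ⟨x, hx, rfl⟩
    exact (hsec ((a + w) / 2) hawm x ⟨lt_trans haw hx.1, hx.2⟩ (ne_of_lt (by linarith : (a + w) / 2 < w))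
      (ne_of_gt hx.1) (by linarith [hx.1])).le
  set μ := sSup S with hμdef
  have hsl_mul : ∀ x, x ≠ w → ℓ x - ℓ w = sl x * (x - w) := by
    intro x hxw
    have hne : x - w ≠ 0 := sub_ne_zero.mpr hxw
    rw [hsl]
    field_simp
  have hsupp : ∀ x ∈ Set.Ioo a b, x ≠ w → ℓ x - ℓ w < μ * (x - w) := by
    intro x hx hxw
    rcases lt_or_gt_of_ne hxw with h | h
    · have hx' : (x + w) / 2 ∈ Set.Ioo a b := ⟨by linarith [hx.1], by linarith⟩
      have hx'w : (x + w) / 2 ≠ w := ne_of_lt (by linarith)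
      have h1 : μ ≤ sl ((x + w) / 2) := by
        apply csSup_le hSne
        rintro v ⟨t, ht, rfl⟩
        exact (hsec ((x + w) / 2) hx' t ⟨lt_trans haw ht.1, ht.2⟩ hx'w (ne_of_gt ht.1)
          (by linarith [ht.1])).le
      have h2 : sl ((x + w) / 2) < sl x := hsec x hx ((x + w) / 2) hx' hxw hx'w (by linarith)
      have h3 : μ < sl x := lt_of_le_of_lt h1 h2
      rw [hsl_mul x hxw]
      exact mul_lt_mul_of_neg_right h3 (by linarith)
    · have hx' : (w + x) / 2 ∈ Set.Ioo a b := ⟨by linarith, by linarith [hx.2]⟩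
      have hx'w : (w + x) / 2 ≠ w := ne_of_gt (by linarith)
      have h1 : sl ((w + x) / 2) ≤ μ :=
        le_csSup hSbdd ⟨(w + x) / 2, ⟨by linarith, by linarith [hx.2]⟩, rfl⟩
      have h2 : sl x < sl ((w + x) / 2) := hsec ((w + x) / 2) hx' x hx hx'w hxw (by linarith)
      have h3 : sl x < μ := lt_of_lt_of_le h2 h1
      rw [hsl_mul x hxw]
      exact mul_lt_mul_of_pos_right h3 (by linarith)
  have hsuppf : ∀ x ∈ Set.Ioo a b, x ≠ w → f x < f w * Real.exp (μ * (x - w)) := by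
    intro x hx hxw
    have h1 := hsupp x hx hxw
    have h2 : f x = Real.exp (ℓ x) := (Real.exp_log (hfpos x hx)).symm
    have h3 : f w * Real.exp (μ * (x - w)) = Real.exp (ℓ w + μ * (x - w)) := by
      rw [Real.exp_add, Real.exp_log hfw]
    rw [h2, h3]
    exact Real.exp_lt_exp.mpr (by linarith)
  have hchordf : ∀ x ∈ Set.Ioo a b, x ≠ w → ∀ t, t ∈ Set.Ioo (min w x) (max w x) →
      f w * Real.exp (sl x * (t - w)) < f t := by
    intro x hx hxw t ht
    have hchord : sl x * (t - w) < ℓ t - ℓ w := by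
      rcases lt_or_gt_of_ne hxw with h | h
      · rw [min_eq_right h.le, max_eq_left h.le] at ht
        have htI : t ∈ Set.Ioo a b := ⟨lt_trans hx.1 ht.1, lt_trans ht.2 hwb⟩
        have h2 : sl t < sl x := hsec x hx t htI hxw (ne_of_lt ht.2) ht.1
        rw [hsl_mul t (ne_of_lt ht.2)]
        exact mul_lt_mul_of_neg_right h2 (by linarith [ht.2])
      · rw [min_eq_left h.le, max_eq_right h.le] at ht
        have htI : t ∈ Set.Ioo a b := ⟨lt_trans haw ht.1, lt_trans ht.2 hx.2⟩
        have h2 : sl x < sl t := hsec t htI x hx (ne_of_gt ht.1) hxw ht.2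
        rw [hsl_mul t (ne_of_gt ht.1)]
        exact mul_lt_mul_of_pos_right h2 (by linarith [ht.1])
    have h2 : f t = Real.exp (ℓ t) := by
      rcases lt_or_gt_of_ne hxw with h | h
      · rw [min_eq_right h.le, max_eq_left h.le] at ht
        exact (Real.exp_log (hfpos t ⟨lt_trans hx.1 ht.1, lt_trans ht.2 hwb⟩)).symm
      · rw [min_eq_left h.le, max_eq_right h.le] at ht
        exact (Real.exp_log (hfpos t ⟨lt_trans haw ht.1, lt_trans ht.2 hx.2⟩)).symm
    have h3 : f w * Real.exp (sl x * (t - w)) = Real.exp (ℓ w + sl x * (t - w)) := by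
      rw [Real.exp_add, Real.exp_log hfw]
    rw [h2, h3]
    exact Real.exp_lt_exp.mpr (by linarith)
  clear hsec hSne hSbdd hμdef hm
  clear_value μ m
  clear hS S
  -- the key pointwise estimate
  have key : ∀ x ∈ Set.Ioo a b, x ≠ w → f x - f w < μ * ∫ t in w..x, f t := by
    intro x hx hxw
    have hxab : x ∈ Set.Icc a b := ⟨hx.1.le, hx.2.le⟩
    have hIntwx : IntervalIntegrable f volume w x := hIntsub w hwab x hxab
    have hfx : 0 < f x := hfpos x hx
    have hExInt : ∀ c : ℝ, IntervalIntegrable (fun t => f w * Real.exp (c * (t - w))) volume w x := by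
      intro c
      apply Continuous.intervalIntegrable
      fun_prop
    rcases lt_or_gt_of_ne hxw with hlt | hgt
    · -- x < w
      have hI : (0 : ℝ) < ∫ t in x..w, f t := by
        apply intervalIntegral_pos_of_pos_on hIntwx.symm _ hlt
        intro t ht
        exact hfpos t ⟨lt_trans hx.1 ht.1, lt_trans ht.2 hwb⟩
      set I := ∫ t in x..w, f t with hIdef
      have hsymm : ∫ t in w..x, f t = -I := intervalIntegral.integral_symm x w
      clear_value I
      rw [hsymm]
      have main : μ * I < f w - f x := by
        rcases lt_trichotomy μ 0 with hμ | hμ | hμ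
        · by_cases hBA : f x ≤ f w
          · nlinarith
          · push_neg at hBA
            have hlog : ℓ w < ℓ x := by
              simp only [hℓ]
              exact Real.log_lt_log hfw hBA
            have hν : sl x < 0 := div_neg_of_pos_of_neg (by linarith) (by linarith)
            have hνμ : μ < sl x := by
              by_contra hcon
              push_neg at hcon
              have h1 := hsupp x hx hxw
              rw [hsl_mul x hxw] at h1
              nlinarith
            have hK : (0 : ℝ) < ∫ t in x..w, (f t - f w * Real.exp (sl x * (t - w))) := by
              apply intervalIntegral_pos_of_pos_on (hIntwx.symm.sub (hExInt (sl x)).symm) _ hlt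
              intro t ht
              have := hchordf x hx hxw t (by rw [min_eq_right hlt.le, max_eq_left hlt.le]; exact ht)
              linarith
            have hexval : Real.exp (sl x * (x - w)) = f x / f w := by
              rw [← hsl_mul x hxw]
              simp only [hℓ]
              rw [Real.exp_sub, Real.exp_log hfx, Real.exp_log hfw]
            have hEint : ∫ t in x..w, f w * Real.exp (sl x * (t - w)) = (f w - f x) / sl x := by
              rw [intervalIntegral.integral_const_mul, aux_exp_int (sl x) w x w hν.ne]
              rw [show sl x * (w - w) = 0 by ring, Real.exp_zero, hexval, ← mul_div_assoc]
              congr 1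
              field_simp
            have hsub : (∫ t in x..w, (f t - f w * Real.exp (sl x * (t - w)))) =
                I - (f w - f x) / sl x := by
              rw [intervalIntegral.integral_sub hIntwx.symm (hExInt (sl x)).symm, hEint, hIdef]
            have h6 : (f w - f x) / sl x < I := by rw [hsub] at hK; linarith
            have h7 : I * sl x < f w - f x := (div_lt_iff_of_neg hν).mp h6
            have h8 : μ * I < sl x * I := mul_lt_mul_of_pos_right hνμ hI
            nlinarith [h7, h8]
        · have h1 := hsuppf x hx hxw
          rw [hμ] at h1 ⊢
          simp only [zero_mul, Real.exp_zero, mul_one] at h1 ⊢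
          linarith
        · -- 0 < μ
          have hJ : (0 : ℝ) < ∫ t in x..w, (f w * Real.exp (μ * (t - w)) - f t) := by
            apply intervalIntegral_pos_of_pos_on ((hExInt μ).symm.sub hIntwx.symm) _ hlt
            intro t ht
            have := hsuppf t ⟨lt_trans hx.1 ht.1, lt_trans ht.2 hwb⟩ (ne_of_lt ht.2)
            linarith
          have hEint : ∫ t in x..w, f w * Real.exp (μ * (t - w)) =
              f w * (1 - Real.exp (μ * (x - w))) / μ := by
            rw [intervalIntegral.integral_const_mul, aux_exp_int μ w x w hμ.ne']
            rw [show μ * (w - w) = 0 by ring, Real.exp_zero]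
            ring
          have hsub : (∫ t in x..w, (f w * Real.exp (μ * (t - w)) - f t)) =
              f w * (1 - Real.exp (μ * (x - w))) / μ - I := by
            rw [intervalIntegral.integral_sub (hExInt μ).symm hIntwx.symm, hEint, hIdef]
          have h5 : I < f w * (1 - Real.exp (μ * (x - w))) / μ := by rw [hsub] at hJ; linarith
          have h6 : μ * I < f w * (1 - Real.exp (μ * (x - w))) := by
            have h9 := (lt_div_iff₀ hμ).mp h5
            linarith [mul_comm I μ]
          have h7 := hsuppf x hx hxw
          linarith
      linarith
    · -- w < x
      have hI : (0 : ℝ) < ∫ t in w..x, f t := by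
        apply intervalIntegral_pos_of_pos_on hIntwx _ hgt
        intro t ht
        exact hfpos t ⟨lt_trans haw ht.1, lt_trans ht.2 hx.2⟩
      set I := ∫ t in w..x, f t with hIdef
      clear_value I
      rcases lt_trichotomy μ 0 with hμ | hμ | hμ
      · have hJ : (0 : ℝ) < ∫ t in w..x, (f w * Real.exp (μ * (t - w)) - f t) := by
          apply intervalIntegral_pos_of_pos_on ((hExInt μ).sub hIntwx) _ hgt
          intro t ht
          have := hsuppf t ⟨lt_trans haw ht.1, lt_trans ht.2 hx.2⟩ (ne_of_gt ht.1)
          linarith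
        have hEint : ∫ t in w..x, f w * Real.exp (μ * (t - w)) =
            f w * (Real.exp (μ * (x - w)) - 1) / μ := by
          rw [intervalIntegral.integral_const_mul, aux_exp_int μ w w x hμ.ne]
          rw [show μ * (w - w) = 0 by ring, Real.exp_zero]
          ring
        have hsub : (∫ t in w..x, (f w * Real.exp (μ * (t - w)) - f t)) =
            f w * (Real.exp (μ * (x - w)) - 1) / μ - I := by
          rw [intervalIntegral.integral_sub (hExInt μ) hIntwx, hEint, hIdef]
        have h5 : I < f w * (Real.exp (μ * (x - w)) - 1) / μ := by rw [hsub] at hJ; linarith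
        have h6 : f w * (Real.exp (μ * (x - w)) - 1) < μ * I := by
          have h9 := (lt_div_iff_of_neg hμ).mp h5
          linarith [mul_comm I μ]
        have h7 := hsuppf x hx hxw
        nlinarith
      · have h1 := hsuppf x hx hxw
        rw [hμ] at h1 ⊢
        simp only [zero_mul, Real.exp_zero, mul_one] at h1 ⊢
        linarith
      · by_cases hBA : f x ≤ f w
        · nlinarith [mul_pos hμ hI]
        · push_neg at hBA
          have hlog : ℓ w < ℓ x := by
            simp only [hℓ]
            exact Real.log_lt_log hfw hBA
          have hν : 0 < sl x := div_pos (by linarith) (by linarith)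
          have hνμ : sl x < μ := by
            by_contra hcon
            push_neg at hcon
            have h1 := hsupp x hx hxw
            rw [hsl_mul x hxw] at h1
            nlinarith
          have hK : (0 : ℝ) < ∫ t in w..x, (f t - f w * Real.exp (sl x * (t - w))) := by
            apply intervalIntegral_pos_of_pos_on (hIntwx.sub (hExInt (sl x))) _ hgt
            intro t ht
            have := hchordf x hx hxw t (by rw [min_eq_left hgt.le, max_eq_right hgt.le]; exact ht)
            linarith
          have hexval : Real.exp (sl x * (x - w)) = f x / f w := by
            rw [← hsl_mul x hxw]
            simp only [hℓ]
            rw [Real.exp_sub, Real.exp_log hfx, Real.exp_log hfw]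
          have hEint : ∫ t in w..x, f w * Real.exp (sl x * (t - w)) = (f x - f w) / sl x := by
            rw [intervalIntegral.integral_const_mul, aux_exp_int (sl x) w w x hν.ne']
            rw [show sl x * (w - w) = 0 by ring, Real.exp_zero, hexval, ← mul_div_assoc]
            congr 1
            field_simp
          have hsub : (∫ t in w..x, (f t - f w * Real.exp (sl x * (t - w)))) =
              I - (f x - f w) / sl x := by
            rw [intervalIntegral.integral_sub hIntwx (hExInt (sl x)), hEint, hIdef]
          have h6 : (f x - f w) / sl x < I := by rw [hsub] at hK; linarith
          have h7 : f x - f w < I * sl x := (div_lt_iff₀ hν).mp h6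
          have h8 : sl x * I < μ * I := mul_lt_mul_of_pos_right hνμ hI
          nlinarith [h7, h8]
  -- integrate the key estimate over [y, z]
  have hFIntyw : IntervalIntegrable F volume y w := by
    apply ContinuousOn.intervalIntegrable
    apply FcontOn.mono
    rw [Set.uIcc_of_le hwIoo.1.le]
    exact fun t ht => hmemab t ht.1 (le_trans ht.2 hwIoo.2.le)
  have hFIntwz : IntervalIntegrable F volume w z := by
    apply ContinuousOn.intervalIntegrable
    apply FcontOn.mono
    rw [Set.uIcc_of_le hwIoo.2.le]
    exact fun t ht => hmemab t (le_trans hwIoo.1.le ht.1) ht.2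
  set g : ℝ → ℝ := fun ξ => f w - μ * F w + μ * F ξ - f ξ with hg
  have hgIntyw : IntervalIntegrable g volume y w :=
    (intervalIntegrable_const.add (hFIntyw.const_mul μ)).sub (hIntsub y hyab w hwab)
  have hgIntwz : IntervalIntegrable g volume w z :=
    (intervalIntegrable_const.add (hFIntwz.const_mul μ)).sub (hIntsub w hwab z hzab)
  have hgpos : ∀ t ∈ Set.Ioo a b, t ≠ w → y ≤ t → t ≤ z → 0 < g t := by
    intro t htI htw h1 h2
    have hk := key t htI htw
    have hd := Fdiff w hwab t (hmemab t h1 h2)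
    rw [← hd] at hk
    simp only [hg]
    linarith
  have hA : (0 : ℝ) < ∫ ξ in y..w, g ξ := by
    apply intervalIntegral_pos_of_pos_on hgIntyw _ hwIoo.1
    intro t ht
    exact hgpos t ⟨lt_of_le_of_lt hy ht.1, lt_trans ht.2 hwb⟩ (ne_of_lt ht.2) ht.1.le
      (le_trans ht.2.le hwIoo.2.le)
  have hB : (0 : ℝ) < ∫ ξ in w..z, g ξ := by
    apply intervalIntegral_pos_of_pos_on hgIntwz _ hwIoo.2
    intro t ht
    exact hgpos t ⟨lt_trans haw ht.1, lt_of_lt_of_le ht.2 hzb⟩ (ne_of_gt ht.1)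
      (le_trans hwIoo.1.le ht.1.le) ht.2.le
  have hAB : (∫ ξ in y..w, g ξ) + (∫ ξ in w..z, g ξ) = ∫ ξ in y..z, g ξ :=
    intervalIntegral.integral_add_adjacent_intervals hgIntyw hgIntwz
  have hgval : ∫ ξ in y..z, g ξ = f w * (z - y) - (F z - F y) := by
    simp only [hg]
    rw [intervalIntegral.integral_sub ((intervalIntegrable_const.add (FIntyz.const_mul μ)))
      (hIntsub y hyab z hzab)]
    rw [intervalIntegral.integral_add intervalIntegrable_const (FIntyz.const_mul μ)]
    rw [intervalIntegral.integral_const_mul, intervalIntegral.integral_const, hintF,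
      ← Fdiff y hyab z hzab, hFw]
    simp only [smul_eq_mul]
    ring
  rw [hgval] at hAB
  linarith
end

section
/- Let α > 0, r ≥ 1, and define χ_r(x) = x^r ∫_0^1 Ψ_r(1−z)(1 + z x)^{α−1} dz for x > 0, where Ψ_r(z) = (r−1)z(1−z)^r + z^{r+1} + r z^2(1−z)^{r−1}. Then χ_r is differentiable on (0,∞) with χ_r'(x) = x^{r−1} ∫_0^1 Ψ_r(1−z)(r + (r+α−1)zx)(1+zx)^{α−2} dz > 0; hence χ_r is strictly increasing, thus injective, on (0,∞). -/
/-!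
Differentiation under the integral sign is legitimate because, for `x` in `(0, 2x₀)` and
`z ∈ (0, 1]`, the base `1 + z x` stays in `[1, 1 + 2x₀]` and the continuous weight `Ψ_r(1 - z)` is
bounded, so the `x`-derivative of the integrand is bounded uniformly.
With the product rule, the identity `(1 + z x)^(α-1) = (1 + z x)^(α-2) (1 + z x)` merges the two
terms into a single integral whose integrand is positive on `(0, 1)`, since
`Ψ_r(w) ≥ w^(r+1) > 0` there. A positive derivative on `(0, ∞)` gives strict monotonicity.
-/

open Real MeasureTheory intervalIntegral Set

noncomputable def psi (r w : ℝ) : ℝ :=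
  (r - 1) * w * (1 - w) ^ r + w ^ (r + 1) + r * w ^ 2 * (1 - w) ^ (r - 1)

lemma continuous_psi {r : ℝ} (hr : 1 ≤ r) : Continuous (psi r) := by
  unfold psi
  have h : ∀ q : ℝ, 0 ≤ q → Continuous fun w : ℝ => (1 - w) ^ q := fun q hq =>
    (continuous_const.sub continuous_id).rpow_const fun _ => Or.inr hq
  have h2 : Continuous fun w : ℝ => w ^ (r + 1) :=
    continuous_id.rpow_const fun _ => Or.inr (by linarith)
  have h1 := h r (by linarith)
  have h3 := h (r - 1) (by linarith)
  fun_prop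

lemma psi_pos {r w : ℝ} (hr : 1 ≤ r) (hw₀ : 0 < w) (hw₁ : w ≤ 1) : 0 < psi r w := by
  have h1w : 0 ≤ 1 - w := by linarith
  have : 0 ≤ (1 - w) ^ r := rpow_nonneg h1w r
  have : 0 ≤ (1 - w) ^ (r - 1) := rpow_nonneg h1w _
  have : 0 < w ^ (r + 1) := rpow_pos_of_pos hw₀ _
  have : 0 ≤ r - 1 := by linarith
  unfold psi
  positivity

lemma rpow_le_rpow_abs_of_one_le {t c p : ℝ} (h1 : 1 ≤ t) (h2 : t ≤ c) : t ^ p ≤ c ^ |p| :=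
  (rpow_le_rpow_of_exponent_le h1 (le_abs_self p)).trans
    (rpow_le_rpow (by linarith) h2 (abs_nonneg p))

lemma intervalIntegrable_mul_one_add_mul_rpow {w : ℝ → ℝ} (hw : Continuous w) (p : ℝ) {x : ℝ}
    (hx : 0 ≤ x) : IntervalIntegrable (fun z => w z * (1 + z * x) ^ p) volume 0 1 := by
  refine ContinuousOn.intervalIntegrable fun z hz => ?_
  rw [uIcc_of_le zero_le_one] at hz
  have : 1 + z * x ≠ 0 := by nlinarith [hz.1]
  exact (hw.continuousAt.mul ((by fun_prop : ContinuousAt (fun z => 1 + z * x) z).rpow_const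
    (Or.inl this))).continuousWithinAt

lemma hasDerivAt_integral_mul_one_add_mul_rpow {w : ℝ → ℝ} (hw : Continuous w) (p : ℝ) {x₀ : ℝ}
    (hx₀ : 0 < x₀) :
    HasDerivAt (fun x => ∫ z in (0:ℝ)..1, w z * (1 + z * x) ^ p)
      (∫ z in (0:ℝ)..1, p * z * w z * (1 + z * x₀) ^ (p - 1)) x₀ := by
  obtain ⟨C, hC⟩ := isCompact_Icc.exists_bound_of_continuousOn (hw.continuousOn (s := Icc 0 1))
  have hC0 : 0 ≤ C := (norm_nonneg _).trans (hC 0 ⟨le_rfl, zero_le_one⟩)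
  have hbase : ∀ z ∈ Ioc (0:ℝ) 1, ∀ x ∈ Ioo 0 (2 * x₀), 1 ≤ 1 + z * x ∧ 1 + z * x ≤ 1 + 2 * x₀ := by
    intro z hz x hx
    constructor <;> nlinarith [hz.1, hz.2, hx.1, hx.2]
  refine (hasDerivAt_integral_of_dominated_loc_of_deriv_le
    (F := fun x z => w z * (1 + z * x) ^ p) (F' := fun x z => p * z * w z * (1 + z * x) ^ (p - 1))
    (bound := fun _ => |p| * C * (1 + 2 * x₀) ^ |p - 1|)
    (Ioo_mem_nhds hx₀ (by linarith : x₀ < 2 * x₀))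
    (.of_forall fun x => (hw.measurable.mul (by fun_prop)).aestronglyMeasurable)
    (intervalIntegrable_mul_one_add_mul_rpow hw p hx₀.le)
    ((by fun_prop : Measurable fun z => p * z * w z * (1 + z * x₀) ^ (p - 1)).aestronglyMeasurable)
    (.of_forall fun z hz x hx => ?_) intervalIntegrable_const
    (.of_forall fun z hz x hx => ?_)).2
  · rw [uIoc_of_le zero_le_one] at hz
    obtain ⟨h1, h2⟩ := hbase z hz x hx
    have hwz : |w z| ≤ C := hC z (Ioc_subset_Icc_self hz)
    have hpow : |(1 + z * x) ^ (p - 1)| ≤ (1 + 2 * x₀) ^ |p - 1| := by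
      rw [abs_of_nonneg (rpow_nonneg (by linarith) _)]
      exact rpow_le_rpow_abs_of_one_le h1 h2
    have hz' : |z| ≤ 1 := by rw [abs_of_pos hz.1]; exact hz.2
    simp only [norm_eq_abs, abs_mul]
    calc |p| * |z| * |w z| * |(1 + z * x) ^ (p - 1)|
        ≤ |p| * 1 * C * (1 + 2 * x₀) ^ |p - 1| := by gcongr
      _ = _ := by ring
  · rw [uIoc_of_le zero_le_one] at hz
    have : 1 + z * x ≠ 0 := by linarith [(hbase z hz x hx).1]
    have hlin : HasDerivAt (fun x => 1 + z * x) z x := by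
      simpa using ((hasDerivAt_id x).const_mul z).const_add 1
    exact ((hlin.rpow_const (Or.inl this)).const_mul (w z)).congr_deriv (by ring)

lemma hasDerivAt_rpow_mul_integral {w : ℝ → ℝ} (hw : Continuous w) (r α : ℝ) {x : ℝ}
    (hx : 0 < x) :
    HasDerivAt (fun x => x ^ r * ∫ z in (0:ℝ)..1, w z * (1 + z * x) ^ (α - 1))
      (x ^ (r - 1) * ∫ z in (0:ℝ)..1,
        w z * (r + (r + α - 1) * z * x) * (1 + z * x) ^ (α - 2)) x := by
  have hxr : HasDerivAt (fun x => x ^ r) (r * x ^ (r - 1)) x := hasDerivAt_rpow_const (.inl hx.ne')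
  refine (hxr.mul (hasDerivAt_integral_mul_one_add_mul_rpow hw (α - 1) hx)).congr_deriv ?_
  have hsplit : ∫ z in (0:ℝ)..1, w z * (r + (r + α - 1) * z * x) * (1 + z * x) ^ (α - 2)
      = ∫ z in (0:ℝ)..1, (r * (w z * (1 + z * x) ^ (α - 1))
          + x * ((α - 1) * z * w z * (1 + z * x) ^ (α - 1 - 1))) := by
    refine integral_congr fun z hz => ?_
    rw [uIcc_of_le zero_le_one] at hz
    have hpos : 0 < 1 + z * x := by nlinarith [hz.1]
    rw [show α - 1 - 1 = α - 2 by ring, show α - 1 = α - 2 + 1 by ring, rpow_add_one hpos.ne']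
    ring
  have hxr' : x ^ r = x ^ (r - 1) * x := by
    rw [← rpow_add_one hx.ne', sub_add_cancel]
  rw [hsplit, integral_add ((intervalIntegrable_mul_one_add_mul_rpow hw _ hx.le).const_mul r)
      ((intervalIntegrable_mul_one_add_mul_rpow (by fun_prop) _ hx.le).const_mul x),
    intervalIntegral.integral_const_mul, intervalIntegral.integral_const_mul, hxr']
  ring

lemma integral_mul_one_add_mul_rpow_pos {w : ℝ → ℝ} (hw : Continuous w)
    (hw₀ : ∀ z ∈ Ioo (0:ℝ) 1, 0 < w z) {r α x : ℝ} (hr : 0 < r) (hrα : 0 ≤ r + α - 1)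
    (hx : 0 < x) :
    0 < ∫ z in (0:ℝ)..1, w z * (r + (r + α - 1) * z * x) * (1 + z * x) ^ (α - 2) := by
  refine intervalIntegral_pos_of_pos_on
    (intervalIntegrable_mul_one_add_mul_rpow (by fun_prop) _ hx.le) (fun z hz => ?_) zero_lt_one
  have : 0 ≤ (r + α - 1) * z * x := by have := hz.1; positivity
  have : 0 < 1 + z * x := by have := hz.1; positivity
  have := hw₀ z hz
  positivity

open Real MeasureTheory intervalIntegral Set in
theorem stmt_17 (α r : ℝ) (hα : 0 < α) (hr : 1 ≤ r) (Ψ χ : ℝ → ℝ)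
    (hΨ : ∀ z : ℝ, Ψ z = (r - 1) * z * (1 - z) ^ r + z ^ (r + 1) + r * z ^ 2 * (1 - z) ^ (r - 1))
    (hχ : ∀ x : ℝ, χ x = x ^ r * ∫ z in (0:ℝ)..1, Ψ (1 - z) * (1 + z * x) ^ (α - 1)) :
    (∀ x : ℝ, 0 < x →
      HasDerivAt χ
        (x ^ (r - 1) * ∫ z in (0:ℝ)..1,
          Ψ (1 - z) * (r + (r + α - 1) * z * x) * (1 + z * x) ^ (α - 2)) x
      ∧ 0 < x ^ (r - 1) * ∫ z in (0:ℝ)..1,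
          Ψ (1 - z) * (r + (r + α - 1) * z * x) * (1 + z * x) ^ (α - 2))
    ∧ StrictMonoOn χ (Ioi 0) ∧ Set.InjOn χ (Ioi 0) := by
  obtain rfl : Ψ = psi r := funext hΨ
  obtain rfl : χ = _ := funext hχ
  have hw : Continuous fun z => psi r (1 - z) := (continuous_psi hr).comp (by fun_prop)
  have hw₀ : ∀ z ∈ Ioo (0:ℝ) 1, 0 < psi r (1 - z) := fun z hz =>
    psi_pos hr (by linarith [hz.2]) (by linarith [hz.1])
  have hderiv := fun x (hx : 0 < x) => hasDerivAt_rpow_mul_integral hw r α hx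
  have hpos := fun x (hx : 0 < x) => mul_pos (rpow_pos_of_pos hx (r - 1))
    (integral_mul_one_add_mul_rpow_pos (r := r) (α := α) hw hw₀ (by linarith) (by linarith) hx)
  have hmono := strictMonoOn_of_hasDerivWithinAt_pos (convex_Ioi 0)
    (fun x hx => (hderiv x hx).continuousAt.continuousWithinAt)
    (fun x hx => (hderiv x (by simpa using hx)).hasDerivWithinAt)
    (fun x hx => hpos x (by simpa using hx))
  exact ⟨fun x hx => ⟨hderiv x hx, hpos x hx⟩, hmono, hmono.injOn⟩
end
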